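/- If n ∈ ℤ has canonical Fibonacci representation rep_F(n) of length 2k+1 with k ≥ 1, then there exist m ∈ ℤ and ℓ ∈ {0,1,2} such that rep_F(n) = rep_F(m) · h(ℓ), where h(0) = 00, h(1) = 01, h(2) = 10; moreover |rep_F(m)| = 2k−1, i.e., m ∈ I_{k−1} \ I_{k−2}. -/

import Mathlib

/-- Fibonacci sequence with `F 0 = 1`, `F 1 = 1`, `F 2 = 2`. -/
def F : ℕ → ℤ
  | 0 => 1
  | 1 => 1
  | (n+2) => F (n+1) + F n

/-- Numerical value of a binary digit. -/
def bv (x : Bool) : ℤ := if x then 1 else 0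

/-- Value of an odd-length binary word `w = w_{2k+1} ⋯ w_1` (most significant
digit first): `val_F(w) = Σ_{i=1}^{2k} w_i F_i − w_{2k+1} F_{2k}`. -/
def valF (w : List Bool) : ℤ :=
  (∑ i ∈ Finset.range (w.length - 1), bv (w.reverse.getD i false) * F (i+1))
    - bv (w.reverse.getD (w.length - 1) false) * F (w.length - 1)

/-- The word has no factor `11`. -/
def no11 (w : List Bool) : Prop :=
  List.Chain' (fun x y => ¬(x = true ∧ y = true)) w

/-- Words of the canonical representation language: odd length, no factor 11,
not beginning with 000 nor with 101. -/
def IsRep (w : List Bool) : Prop :=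
  Odd w.length ∧ no11 w ∧
    ¬ ([false, false, false] <+: w) ∧ ¬ ([true, false, true] <+: w)

/-- `Ik k = {i ∈ ℤ : −F_{2k} ≤ i < F_{2k+1}}`. -/
def Ik (k : ℕ) : Set ℤ := {i : ℤ | -F (2*k) ≤ i ∧ i < F (2*k+1)}

/-- Shifted version of `Ik` incorporating `I_{−1} = ∅`. -/
def Iext : ℕ → Set ℤ
  | 0 => ∅
  | (k+1) => Ik k

/-- The morphism `h : 0 ↦ 00, 1 ↦ 01, 2 ↦ 10` on single letters. -/
def h3 : Fin 3 → List Bool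
  | 0 => [false, false]
  | 1 => [false, true]
  | 2 => [true, false]

/-! Cutting the last two digits off a canonical word of length `2k+1` leaves a word `w` of
length `2k-1` that is again canonical (every defining condition passes to odd-length
prefixes), and the two digits cut off avoid `11`, so they form some `h(ℓ)`. A canonical word
of length `2j+1` has its value in the shell `I_j \ I_{j-1}`; the shells are disjoint, so the
value fixes the length, and among words of one length avoiding `11` it fixes the word
(Zeckendorf uniqueness). Hence `rep_F(val_F w) = w`. -/

theorem F_eq_fib : ∀ n, F n = Nat.fib (n + 1)
  | 0 => rfl
  | 1 => rfl
  | n + 2 => by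
      rw [F, F_eq_fib (n + 1), F_eq_fib n, Nat.fib_add_two (n := n + 1)]
      push_cast
      ring

theorem F_add_two (n : ℕ) : F (n + 2) = F (n + 1) + F n := rfl

theorem F_pos (n : ℕ) : 0 < F n := by
  rw [F_eq_fib]
  exact_mod_cast Nat.fib_pos.2 n.succ_pos

theorem F_mono : Monotone F := fun a b hab => by
  simp only [F_eq_fib]
  exact_mod_cast Nat.fib_mono (Nat.succ_le_succ hab)

@[simp] theorem bv_true : bv true = 1 := rfl

@[simp] theorem bv_false : bv false = 0 := rfl

theorem no11.tail {a : Bool} {s : List Bool} (h : no11 (a :: s)) : no11 s :=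
  List.IsChain.tail h

theorem not_no11_true_true (s : List Bool) : ¬ no11 (true :: true :: s) :=
  fun h => (List.isChain_cons_cons.mp h).1 ⟨rfl, rfl⟩

def valUnsigned : List Bool → ℤ
  | [] => 0
  | d :: t => bv d * F (t.length + 1) + valUnsigned t

@[simp] theorem valUnsigned_cons_false (t : List Bool) :
    valUnsigned (false :: t) = valUnsigned t := by
  simp [valUnsigned]

@[simp] theorem valUnsigned_cons_true (t : List Bool) :
    valUnsigned (true :: t) = F (t.length + 1) + valUnsigned t := by
  simp [valUnsigned]

theorem valUnsigned_nonneg : ∀ l : List Bool, 0 ≤ valUnsigned l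
  | [] => le_rfl
  | false :: t => by simpa using valUnsigned_nonneg t
  | true :: t => by simpa using add_nonneg (F_pos _).le (valUnsigned_nonneg t)

theorem valUnsigned_lt_F : ∀ {l : List Bool}, no11 l → valUnsigned l < F (l.length + 1)
  | [], _ => F_pos 1
  | [true], _ => by decide
  | false :: t, h => by
      simpa using (valUnsigned_lt_F h.tail).trans_le (F_mono (Nat.le_succ _))
  | true :: false :: t, h => by
      have ht := valUnsigned_lt_F h.tail.tail
      simp only [valUnsigned_cons_true, valUnsigned_cons_false, List.length_cons]
      linarith [F_add_two (t.length + 1)]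
  | true :: true :: t, h => absurd h (not_no11_true_true t)

theorem valUnsigned_lt_F_length {s : List Bool} (h : no11 (true :: s)) :
    valUnsigned s < F s.length := by
  match s, h with
  | [], _ => exact F_pos 0
  | false :: t, h => simpa using valUnsigned_lt_F h.tail.tail
  | true :: t, h => exact absurd h (not_no11_true_true t)

theorem F_le_valUnsigned {b c : Bool} (s : List Bool) (hbc : ¬(b = false ∧ c = false)) :
    F (s.length + 1) ≤ valUnsigned (b :: c :: s) := by
  have hs := valUnsigned_nonneg s
  have hF := F_mono (Nat.le_succ (s.length + 1))
  cases b <;> cases c <;> simp at hbc ⊢ <;> linarith [F_pos (s.length + 1), F_pos s.length]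

theorem valUnsigned_true_cons_gt {x y : List Bool} (hy : no11 y) (hxy : x.length = y.length) :
    valUnsigned (false :: y) < valUnsigned (true :: x) := by
  have := valUnsigned_lt_F hy
  have := valUnsigned_nonneg x
  simp only [valUnsigned_cons_false, valUnsigned_cons_true, hxy]
  linarith

theorem valUnsigned_injOn_length :
    ∀ {u v : List Bool}, no11 u → no11 v → u.length = v.length →
      valUnsigned u = valUnsigned v → u = v
  | [], [], _, _, _, _ => rfl
  | a :: s, b :: t, hu, hv, hl, hval => by
      have hst : s.length = t.length := Nat.succ.inj hl
      obtain rfl : a = b := by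
        cases a <;> cases b
        · rfl
        · exact absurd hval (valUnsigned_true_cons_gt hu.tail hst.symm).ne
        · exact absurd hval (valUnsigned_true_cons_gt hv.tail hst).ne'
        · rfl
      have : valUnsigned s = valUnsigned t := by
        cases a <;> simpa [hst] using hval
      rw [valUnsigned_injOn_length hu.tail hv.tail hst this]

theorem getD_reverse_cons_of_lt (a : Bool) {t : List Bool} {i : ℕ} (hi : i < t.length) :
    (a :: t).reverse.getD i false = t.reverse.getD i false := by
  rw [List.reverse_cons, List.getD_append _ _ _ _ (by simpa using hi)]

theorem getD_reverse_cons_length (a : Bool) (t : List Bool) :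
    (a :: t).reverse.getD t.length false = a := by
  rw [List.reverse_cons, List.getD_append_right _ _ _ _ (by simp)]
  simp

theorem sum_getD_reverse_cons (a : Bool) (t : List Bool) :
    ∑ i ∈ Finset.range t.length, bv ((a :: t).reverse.getD i false) * F (i + 1)
      = ∑ i ∈ Finset.range t.length, bv (t.reverse.getD i false) * F (i + 1) :=
  Finset.sum_congr rfl fun _ hi => by
    rw [getD_reverse_cons_of_lt a (Finset.mem_range.mp hi)]

theorem valUnsigned_eq_sum : ∀ t : List Bool,
    valUnsigned t = ∑ i ∈ Finset.range t.length, bv (t.reverse.getD i false) * F (i + 1)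
  | [] => rfl
  | d :: t => by
      rw [List.length_cons, Finset.sum_range_succ, sum_getD_reverse_cons,
        getD_reverse_cons_length, ← valUnsigned_eq_sum t, valUnsigned, add_comm]

theorem valF_cons (a : Bool) (t : List Bool) :
    valF (a :: t) = valUnsigned t - bv a * F t.length := by
  simp only [valF, List.length_cons, Nat.add_sub_cancel, sum_getD_reverse_cons,
    getD_reverse_cons_length, valUnsigned_eq_sum]

theorem Ik_mono : Monotone Ik := fun i j hij x ⟨hlo, hhi⟩ =>
  ⟨(neg_le_neg (F_mono (by omega))).trans hlo, hhi.trans_le (F_mono (by omega))⟩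

theorem Iext_mono : Monotone Iext := by
  refine monotone_nat_of_le_succ fun
    | 0 => Set.empty_subset _
    | j + 1 => Ik_mono j.le_succ

theorem eq_of_mem_sdiff_of_monotone {α : Type*} {s : ℕ → Set α} (hs : Monotone s) {x : α}
    {i j : ℕ} (hi : x ∈ s (i + 1) \ s i) (hj : x ∈ s (j + 1) \ s j) : i = j := by
  by_contra hne
  rcases Nat.lt_or_gt_of_ne hne with h | h
  · exact hj.2 (hs h hi.1)
  · exact hi.2 (hs h hj.1)

theorem IsRep.valF_mem_Iext_sdiff {w : List Bool} (hw : IsRep w) {j : ℕ}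
    (hl : w.length = 2 * j + 1) : valF w ∈ Iext (j + 1) \ Iext j := by
  obtain ⟨-, h11, h000, h101⟩ := hw
  match w, j, hl with
  | [a], 0, _ => cases a <;> simp [Iext, Ik, valF_cons] <;> decide
  | [_, _], _, hl => simp at hl
  | a :: b :: c :: s, j + 1, hl =>
    have hs : s.length = 2 * j := by simp at hl; omega
    simp only [Iext, Ik, Set.mem_sdiff, Set.mem_ofPred_eq, valF_cons, List.length_cons, hs,
      show 2 * (j + 1) = 2 * j + 2 by ring, not_and_or, not_le, not_lt]
    cases a with
    | true =>
      obtain rfl : b = false := by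
        cases b
        · rfl
        · exact absurd h11 (not_no11_true_true _)
      obtain rfl : c = false := by
        cases c
        · rfl
        · exact absurd ⟨s, rfl⟩ h101
      have hlt := valUnsigned_lt_F h11.tail.tail.tail
      have := valUnsigned_nonneg s
      rw [hs] at hlt
      simp only [valUnsigned_cons_false, bv_true]
      refine ⟨⟨?_, ?_⟩, Or.inl ?_⟩ <;> linarith [F_pos (2 * j), F_pos (2 * j + 3), F_add_two (2 * j)]
    | false =>
      have hbc : ¬(b = false ∧ c = false) := by
        rintro ⟨rfl, rfl⟩
        exact h000 ⟨s, rfl⟩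
      have hlo := F_le_valUnsigned s hbc
      have hhi := valUnsigned_lt_F h11.tail
      simp only [List.length_cons, hs] at hlo hhi
      simp only [bv_false, zero_mul, sub_zero]
      exact ⟨⟨by linarith [valUnsigned_nonneg (b :: c :: s), F_pos (2 * j + 2)], hhi⟩, Or.inr hlo⟩

theorem valF_true_cons_neg {s : List Bool} (h : no11 (true :: s)) : valF (true :: s) < 0 := by
  simpa [valF_cons] using valUnsigned_lt_F_length h

theorem valF_false_cons_nonneg (t : List Bool) : 0 ≤ valF (false :: t) := by
  simpa [valF_cons] using valUnsigned_nonneg t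

theorem valF_injOn_length {x y : List Bool} (hx : no11 x) (hy : no11 y)
    (hl : x.length = y.length) (hval : valF x = valF y) : x = y := by
  match x, y, hx, hy, hl with
  | [], [], _, _, _ => rfl
  | a :: s, b :: t, hx, hy, hl =>
    have hst : s.length = t.length := Nat.succ.inj hl
    obtain rfl : a = b := by
      cases a <;> cases b
      · rfl
      · linarith [valF_true_cons_neg hy, valF_false_cons_nonneg s]
      · linarith [valF_true_cons_neg hx, valF_false_cons_nonneg t]
      · rfl
    rw [valF_cons, valF_cons, hst] at hval
    rw [valUnsigned_injOn_length hx.tail hy.tail hst (by linarith)]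

theorem IsRep.eq_of_valF_eq {x y : List Bool} (hx : IsRep x) (hy : IsRep y)
    (hval : valF x = valF y) : x = y := by
  obtain ⟨i, hi⟩ := hx.1
  obtain ⟨j, hj⟩ := hy.1
  have hmem := hy.valF_mem_Iext_sdiff hj
  rw [← hval] at hmem
  obtain rfl := eq_of_mem_sdiff_of_monotone Iext_mono (hx.valF_mem_Iext_sdiff hi) hmem
  exact valF_injOn_length hx.2.1 hy.2.1 (hi.trans hj.symm) hval

theorem IsRep.of_prefix {u w : List Bool} (hu : IsRep u) (hwu : w <+: u) (hw : Odd w.length) :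
    IsRep w :=
  ⟨hw, hu.2.1.prefix hwu, fun h => hu.2.2.1 (h.trans hwu), fun h => hu.2.2.2 (h.trans hwu)⟩

theorem exists_h3_eq {a b : Bool} (h : no11 [a, b]) : ∃ ℓ, h3 ℓ = [a, b] := by
  cases a <;> cases b
  · exact ⟨0, rfl⟩
  · exact ⟨1, rfl⟩
  · exact ⟨2, rfl⟩
  · exact absurd h (not_no11_true_true [])

/-- If `rep_F(n)` has length `2k+1` with `k ≥ 1`, then `rep_F(n) = rep_F(m)·h(ℓ)`
for some `m ∈ I_{k−1} \ I_{k−2}` and some `ℓ ∈ {0,1,2}`. -/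
theorem repF_decomposition (repF : ℤ → List Bool)
    (hrep : ∀ n : ℤ, IsRep (repF n) ∧ valF (repF n) = n)
    (n : ℤ) (k : ℕ) (hk : 1 ≤ k) (hlen : (repF n).length = 2*k+1) :
    ∃ m : ℤ, ∃ ℓ : Fin 3,
      repF n = repF m ++ h3 ℓ ∧ (repF m).length = 2*k-1
        ∧ m ∈ Iext k \ Iext (k-1) := by
  obtain ⟨j, rfl⟩ : ∃ j, k = j + 1 := ⟨k - 1, by omega⟩
  set w := (repF n).take (2 * j + 1)
  have hsplit : repF n = w ++ (repF n).drop (2 * j + 1) := (List.take_append_drop _ _).symm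
  have hw_len : w.length = 2 * j + 1 := by simp [w, hlen]
  obtain ⟨a, b, hab⟩ : ∃ a b, (repF n).drop (2 * j + 1) = [a, b] :=
    List.length_eq_two.mp (by simp [hlen]; omega)
  rw [hab] at hsplit
  have hw : IsRep w := (hrep n).1.of_prefix (List.take_prefix _ _) ⟨j, hw_len⟩
  obtain ⟨ℓ, hℓ⟩ := exists_h3_eq ((hrep n).1.2.1.suffix ⟨w, hsplit.symm⟩)
  have hrepm : repF (valF w) = w := (hrep _).1.eq_of_valF_eq hw (hrep _).2
  refine ⟨valF w, ℓ, ?_, ?_, ?_⟩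
  · rw [hrepm, hℓ, ← hsplit]
  · rw [hrepm, hw_len]; omega
  · simpa using hw.valF_mem_Iext_sdiff hw_len
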